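/- If F is an ultrafilter of separations in (X, f) of order k+1, then T = {(A, B) : (B, A) ∈ F} is a tangle of separations of order k+1 on (X, f). -/

import Mathlib

open Set

variable {α : Type*}

/-- Symmetry of a set function: `f A = f Aᶜ`. -/
def SymmFn (f : Set α → ℕ) : Prop := ∀ A : Set α, f A = f Aᶜ

/-- Submodularity of a set function. -/
def SubmodFn (f : Set α → ℕ) : Prop :=
  ∀ A B : Set α, f A + f B ≥ f (A ∩ B) + f (A ∪ B)

/-- A separation of the ground set: a partition `(A, B)` of the universe. -/
def IsSep (p : Set α × Set α) : Prop :=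
  p.1 ∪ p.2 = Set.univ ∧ p.1 ∩ p.2 = ∅

/-- Partial order on separations: `(A,B) ≤ (C,D)` iff `A ⊆ C` and `D ⊆ B`. -/
def SepLE (p q : Set α × Set α) : Prop := p.1 ⊆ q.1 ∧ q.2 ⊆ p.2

/-- Tangle of separations of order `k+1`. -/
def IsTangle (f : Set α → ℕ) (k : ℕ) (T : Set (Set α × Set α)) : Prop :=
  (∀ p ∈ T, IsSep p ∧ f p.1 ≤ k) ∧
  (∀ A B : Set α, IsSep (A, B) → f A ≤ k → ((A, B) ∈ T ∨ (B, A) ∈ T)) ∧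
  (∀ e : α, f {e} ≤ k → (({e} : Set α), ({e} : Set α)ᶜ) ∈ T) ∧
  (∀ p₁ ∈ T, ∀ p₂ ∈ T, ∀ p₃ ∈ T,
    p₁.1 ∪ p₂.1 ∪ p₃.1 ≠ (Set.univ : Set α))

/-- Linear tangle of separations of order `k+1`. -/
def IsLinearTangle (f : Set α → ℕ) (k : ℕ) (T : Set (Set α × Set α)) : Prop :=
  (∀ p ∈ T, IsSep p ∧ f p.1 ≤ k) ∧
  (∀ A B : Set α, IsSep (A, B) → f A ≤ k → ((A, B) ∈ T ∨ (B, A) ∈ T)) ∧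
  (∀ e : α, f {e} ≤ k → (({e} : Set α), ({e} : Set α)ᶜ) ∈ T) ∧
  (∀ p₁ ∈ T, ∀ p₂ ∈ T, ∀ e : α, f {e} ≤ k →
    p₁.1 ∪ p₂.1 ∪ {e} ≠ (Set.univ : Set α))

/-- Ultrafilter of separations of order `k+1`. -/
def IsUltraSep (f : Set α → ℕ) (k : ℕ) (F : Set (Set α × Set α)) : Prop :=
  (∀ p ∈ F, IsSep p ∧ f p.1 ≤ k) ∧
  (∀ A B : Set α, IsSep (A, B) → f A ≤ k → ((A, B) ∈ F ∨ (B, A) ∈ F)) ∧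
  ((∅, (Set.univ : Set α)) ∉ F) ∧
  (∀ e : α, f {e} ≤ k → (({e} : Set α), ({e} : Set α)ᶜ) ∉ F) ∧
  (∀ p ∈ F, ∀ q : Set α × Set α, SepLE p q → IsSep q → f q.1 ≤ k → q ∈ F) ∧
  (∀ p ∈ F, ∀ q ∈ F, f (p.1 ∩ q.1) ≤ k → (p.1 ∩ q.1, p.2 ∪ q.2) ∈ F)

/-- Weak ultrafilter of separations of order `k+1`. -/
def IsWeakUltraSep (f : Set α → ℕ) (k : ℕ) (F : Set (Set α × Set α)) : Prop :=
  (∀ p ∈ F, IsSep p ∧ f p.1 ≤ k) ∧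
  (∀ A B : Set α, IsSep (A, B) → f A ≤ k → ((A, B) ∈ F ∨ (B, A) ∈ F)) ∧
  ((∅, (Set.univ : Set α)) ∉ F) ∧
  (∀ e : α, f {e} ≤ k → (({e} : Set α), ({e} : Set α)ᶜ) ∉ F) ∧
  (∀ p ∈ F, ∀ q : Set α × Set α, SepLE p q → IsSep q → f q.1 ≤ k → q ∈ F) ∧
  (∀ p ∈ F, ∀ q ∈ F, f (p.1 ∩ q.1) ≤ k → p.1 ∩ q.1 ≠ ∅)

/-- Single ultrafilter of separations of order `k+1`. -/
def IsSingleUltraSep (f : Set α → ℕ) (k : ℕ) (F : Set (Set α × Set α)) : Prop :=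
  (∀ p ∈ F, IsSep p ∧ f p.1 ≤ k) ∧
  (∀ A B : Set α, IsSep (A, B) → f A ≤ k → ((A, B) ∈ F ∨ (B, A) ∈ F)) ∧
  ((∅, (Set.univ : Set α)) ∉ F) ∧
  (∀ e : α, f {e} ≤ k → (({e} : Set α), ({e} : Set α)ᶜ) ∉ F) ∧
  (∀ p ∈ F, ∀ q : Set α × Set α, SepLE p q → IsSep q → f q.1 ≤ k → q ∈ F) ∧
  (∀ p ∈ F, ∀ e : α, f {e} ≤ k → f (p.1 \ {e}) ≤ k →
    (p.1 \ {e}, p.2 ∪ {e}) ∈ F)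

/-- Profile of separations of order `k+1`. -/
def IsProfileSep (f : Set α → ℕ) (k : ℕ) (P : Set (Set α × Set α)) : Prop :=
  (∀ p ∈ P, IsSep p ∧ f p.1 ≤ k) ∧
  (∀ A B : Set α, IsSep (A, B) → f A ≤ k → ((A, B) ∈ P ∨ (B, A) ∈ P)) ∧
  (∀ p : Set α × Set α, ∀ q ∈ P, SepLE p q → IsSep p → f p.1 ≤ k →
    (p.2, p.1) ∉ P) ∧
  (∀ p ∈ P, ∀ q ∈ P, (p.2 ∩ q.2, p.1 ∪ q.1) ∉ P)

/-- A profile is non-principal if it contains all small singleton separations. -/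
def NonPrincipalSep (f : Set α → ℕ) (k : ℕ) (P : Set (Set α × Set α)) : Prop :=
  ∀ e : α, f {e} ≤ k → (({e} : Set α), ({e} : Set α)ᶜ) ∈ P

/-! Write `B ∈ F` for `(B, Bᶜ) ∈ F`. Since `f` is symmetric and submodular, `f ∅ ≤ f A` for all
`A`, so two members of `F` always meet (else `F` would contain `(∅, X)`); hence if `E` has order
`≤ k` and misses some member of `F`, then `Eᶜ ∈ F`. Suppose `B₁ ∩ B₂ ∩ B₃ = ∅` with all `Bᵢ ∈ F`.
If the corners `Bᵢ \ Bⱼ` and `Bₗ \ Bᵢ` (`{i, j, l} = {1, 2, 3}`) both have order `≤ k`, then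
`(Bᵢ \ Bⱼ)ᶜ ∈ F`, and its intersection with `Bₗ` is `Bₗ \ Bᵢ`, which is then in `F` but misses
`Bᵢ`. By posimodularity, of the two corners `Bᵢ \ Bⱼ`, `Bⱼ \ Bᵢ` at least one has order `≤ k`, and
no orientation of the triangle avoids such a forbidden pair of small corners. -/

lemma IsSep.snd_eq_compl {p : Set α × Set α} (h : IsSep p) : p.2 = p.1ᶜ :=
  eq_compl_iff_isCompl.2 <|
    IsCompl.of_eq (by rw [inf_comm]; exact h.2) (by rw [sup_comm]; exact h.1)

lemma IsSep.swap {p : Set α × Set α} (h : IsSep p) : IsSep p.swap :=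
  ⟨by rw [Prod.fst_swap, Prod.snd_swap, union_comm, h.1],
    by rw [Prod.fst_swap, Prod.snd_swap, inter_comm, h.2]⟩

lemma isSep_compl (A : Set α) : IsSep (A, Aᶜ) :=
  ⟨union_compl_self A, inter_compl_self A⟩

section SymmetricSubmodular

variable {f : Set α → ℕ}

lemma SymmFn.apply_empty_le (hs : SymmFn f) (hm : SubmodFn f) (A : Set α) : f ∅ ≤ f A := by
  have h := hm A Aᶜ
  rw [inter_compl_self, union_compl_self, ← compl_empty, ← hs, ← hs] at h
  omega

lemma SymmFn.posimodular (hs : SymmFn f) (hm : SubmodFn f) (A B : Set α) :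
    f (A \ B) + f (B \ A) ≤ f A + f B := by
  have h := hm A Bᶜ
  rw [← hs B, hs (A ∪ Bᶜ), compl_union, compl_compl, inter_comm Aᶜ] at h
  rwa [sdiff_eq, sdiff_eq]

lemma SymmFn.sdiff_le_or_sdiff_le (hs : SymmFn f) (hm : SubmodFn f) {k : ℕ} {A B : Set α}
    (hA : f A ≤ k) (hB : f B ≤ k) : f (A \ B) ≤ k ∨ f (B \ A) ≤ k := by
  have := hs.posimodular hm A B
  omega

end SymmetricSubmodular

namespace IsUltraSep

variable {f : Set α → ℕ} {k : ℕ} {F : Set (Set α × Set α)}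

lemma snd_eq_compl (hF : IsUltraSep f k F) {p : Set α × Set α} (hp : p ∈ F) : p.2 = p.1ᶜ :=
  (hF.1 p hp).1.snd_eq_compl

lemma inter_nonempty (hF : IsUltraSep f k F) (hs : SymmFn f) (hm : SubmodFn f)
    {p q : Set α × Set α} (hp : p ∈ F) (hq : q ∈ F) : (p.1 ∩ q.1).Nonempty := by
  rw [nonempty_iff_ne_empty]
  intro hpq
  have hsmall : f (p.1 ∩ q.1) ≤ k := by
    rw [hpq]; exact (hs.apply_empty_le hm p.1).trans (hF.1 p hp).2
  have hmem := hF.2.2.2.2.2 p hp q hq hsmall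
  rw [hF.snd_eq_compl hp, hF.snd_eq_compl hq, ← compl_inter, hpq, compl_empty] at hmem
  exact hF.2.2.1 hmem

lemma compl_mem_of_disjoint (hF : IsUltraSep f k F) (hs : SymmFn f) (hm : SubmodFn f)
    {E : Set α} (hE : f E ≤ k) {q : Set α × Set α} (hq : q ∈ F) (hEq : Disjoint E q.1) :
    (Eᶜ, E) ∈ F :=
  (hF.2.1 E Eᶜ (isSep_compl E) hE).resolve_left fun hmem =>
    (hF.inter_nonempty hs hm hmem hq).ne_empty hEq.inter_eq

lemma not_small_corners (hF : IsUltraSep f k F) (hs : SymmFn f) (hm : SubmodFn f)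
    {B₁ B₂ B₃ : Set α} (h₁ : (B₁, B₁ᶜ) ∈ F) (h₂ : (B₂, B₂ᶜ) ∈ F) (h₃ : (B₃, B₃ᶜ) ∈ F)
    (hempty : B₁ ∩ B₂ ∩ B₃ = ∅) (h₁₂ : f (B₁ \ B₂) ≤ k) (h₃₁ : f (B₃ \ B₁) ≤ k) : False := by
  have hcorner : (B₁ \ B₂)ᶜ ∩ B₃ = B₃ \ B₁ := by
    ext x
    have := eq_empty_iff_forall_notMem.1 hempty x
    simp only [mem_inter_iff, mem_sdiff, mem_compl_iff] at this ⊢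
    tauto
  have hcompl : ((B₁ \ B₂)ᶜ, B₁ \ B₂) ∈ F :=
    hF.compl_mem_of_disjoint hs hm h₁₂ h₂ disjoint_sdiff_left
  have hmem := hF.2.2.2.2.2 _ hcompl _ h₃ (by rwa [hcorner])
  have hmeet := hF.inter_nonempty hs hm hmem h₁
  simp only [hcorner, sdiff_inter_self, Set.not_nonempty_empty] at hmeet

lemma inter_inter_nonempty (hF : IsUltraSep f k F) (hs : SymmFn f) (hm : SubmodFn f)
    {B₁ B₂ B₃ : Set α} (h₁ : (B₁, B₁ᶜ) ∈ F) (h₂ : (B₂, B₂ᶜ) ∈ F) (h₃ : (B₃, B₃ᶜ) ∈ F) :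
    (B₁ ∩ B₂ ∩ B₃).Nonempty := by
  rw [nonempty_iff_ne_empty]
  intro hempty
  have e₁₃₂ : B₁ ∩ B₃ ∩ B₂ = ∅ := by rw [← hempty]; ac_rfl
  have e₂₁₃ : B₂ ∩ B₁ ∩ B₃ = ∅ := by rw [← hempty]; ac_rfl
  have e₂₃₁ : B₂ ∩ B₃ ∩ B₁ = ∅ := by rw [← hempty]; ac_rfl
  have e₃₁₂ : B₃ ∩ B₁ ∩ B₂ = ∅ := by rw [← hempty]; ac_rfl
  have e₃₂₁ : B₃ ∩ B₂ ∩ B₁ = ∅ := by rw [← hempty]; ac_rfl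
  have := hF.not_small_corners hs hm h₁ h₂ h₃ hempty
  have := hF.not_small_corners hs hm h₁ h₃ h₂ e₁₃₂
  have := hF.not_small_corners hs hm h₂ h₁ h₃ e₂₁₃
  have := hF.not_small_corners hs hm h₂ h₃ h₁ e₂₃₁
  have := hF.not_small_corners hs hm h₃ h₁ h₂ e₃₁₂
  have := hF.not_small_corners hs hm h₃ h₂ h₁ e₃₂₁
  have := hs.sdiff_le_or_sdiff_le hm (hF.1 _ h₁).2 (hF.1 _ h₂).2
  have := hs.sdiff_le_or_sdiff_le hm (hF.1 _ h₁).2 (hF.1 _ h₃).2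
  have := hs.sdiff_le_or_sdiff_le hm (hF.1 _ h₂).2 (hF.1 _ h₃).2
  tauto

end IsUltraSep

theorem stmt7_general (f : Set α → ℕ) (hs : SymmFn f) (hm : SubmodFn f)
    (k : ℕ) (F : Set (Set α × Set α)) (hF : IsUltraSep f k F) :
    IsTangle f k {p : Set α × Set α | (p.2, p.1) ∈ F} := by
  have hfst {p : Set α × Set α} (hp : (p.2, p.1) ∈ F) : p.1 = p.2ᶜ := hF.snd_eq_compl hp
  have hmem {p : Set α × Set α} (hp : (p.2, p.1) ∈ F) : (p.2, p.2ᶜ) ∈ F := by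
    rw [← hfst hp]; exact hp
  refine ⟨fun p hp => ?_, fun A B hAB hA => ?_, fun e he => ?_, fun p₁ h₁ p₂ h₂ p₃ h₃ => ?_⟩
  · refine ⟨(hF.1 _ hp).1.swap, ?_⟩
    rw [hfst hp, ← hs]; exact (hF.1 _ hp).2
  · obtain rfl : B = Aᶜ := hAB.snd_eq_compl
    exact hF.2.1 Aᶜ A hAB.swap (by rwa [← hs])
  · exact (hF.2.1 {e}ᶜ {e} (isSep_compl _).swap (by rwa [← hs])).resolve_right
      (hF.2.2.2.1 e he)
  · rw [hfst h₁, hfst h₂, hfst h₃, ← compl_inter, ← compl_inter, Ne, compl_univ_iff]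
    exact (hF.inter_inter_nonempty hs hm (hmem h₁) (hmem h₂) (hmem h₃)).ne_empty

theorem stmt7 [Fintype α] (f : Set α → ℕ) (hs : SymmFn f) (hm : SubmodFn f)
    (k : ℕ) (F : Set (Set α × Set α)) (hF : IsUltraSep f k F) :
    IsTangle f k {p : Set α × Set α | (p.2, p.1) ∈ F} :=
  stmt7_general f hs hm k F hF
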